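/- Let ω = (t_1, t_2, …) be a strictly increasing sequence of positive reals satisfying t_c/c → 1 as c → ∞. Then for every sequence c_1, c_2, … of positive integers with c_n → ∞ and c_n/n → 0, we have B(c_n,n)(ω)/√(2 c_n n) → 1 as n → ∞. -/

import Mathlib

open MeasureTheory Filter Topology
open scoped ENNReal NNReal

/-- The function `f(p) = -log(1-p)` for `0 ≤ p < 1`, `f(1) = ∞`, evaluated at `p = i/n`,
taking values in `ℝ≥0∞`. -/
noncomputable def fE (n : ℕ) (i : ℕ) : ℝ≥0∞ :=
  if i < n then ENNReal.ofReal (-Real.log (1 - (i : ℝ) / n)) else ⊤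

/-- The embedded collision process: `Bemb n t c` is `B(c,n)(ω)` for the strictly increasing
sequence `ω = (t 1, t 2, …)` of positive reals (with `t 0 = 0`). -/
noncomputable def Bemb (n : ℕ) (t : ℕ → ℝ) : ℕ → ℕ
  | 0 => 0
  | c + 1 =>
      Bemb n t c +
        sInf {j : ℕ | 1 ≤ j ∧
          ENNReal.ofReal (t (c + 1) - t c) ≤
            ∑ i ∈ Finset.Ico (Bemb n t c - c) (Bemb n t c - c + j), fE n i}

/-!
Write `J_c = B(c,n) - c`. The `c`-th step of `B` stops as soon as its block of values `f(i/n)`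
exceeds `t_c - t_{c-1}`, so telescoping gives
`∑_{i < J_c} f(i/n) ≤ t_c - t_0 ≤ ∑_{i < J_c} f(i/n) + c f(J_c/n)`.
Since `p ≤ f(p) ≤ p/(1-p)`, both sums are `J_c²/(2n) (1 + o(1))` as long as `J_c = o(n)`, which
gives `J_c ~ √(2 n t_c) ~ √(2 c n)`; and `c = o(√(c n))` because `c/n → 0`.
-/

open Finset

lemma fE_eq_top {n i : ℕ} (h : n ≤ i) : fE n i = ⊤ := if_neg h.not_gt

lemma fE_of_lt {n i : ℕ} (h : i < n) :
    fE n i = ENNReal.ofReal (-Real.log (1 - (i : ℝ) / n)) := if_pos h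

lemma one_sub_natCast_div_pos {n i : ℕ} (h : i < n) : 0 < 1 - (i : ℝ) / n := by
  have hn : (0 : ℝ) < n := by exact_mod_cast (Nat.zero_le i).trans_lt h
  rw [sub_pos, div_lt_one hn]
  exact_mod_cast h

lemma fE_mono (n : ℕ) : Monotone (fE n) := by
  intro i j hij
  rcases lt_or_ge j n with hj | hj
  · rw [fE_of_lt (hij.trans_lt hj), fE_of_lt hj]
    refine ENNReal.ofReal_le_ofReal (neg_le_neg (Real.log_le_log (one_sub_natCast_div_pos hj) ?_))
    gcongr
  · exact (fE_eq_top hj).symm ▸ le_top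

lemma ofReal_div_le_fE (n i : ℕ) : ENNReal.ofReal ((i : ℝ) / n) ≤ fE n i := by
  rcases lt_or_ge i n with h | h
  · rw [fE_of_lt h]
    refine ENNReal.ofReal_le_ofReal ?_
    linarith [Real.log_le_sub_one_of_pos (one_sub_natCast_div_pos h)]
  · exact (fE_eq_top h).symm ▸ le_top

/-- `-log (1 - p) ≤ p / (1 - p)`, with `p = i / n`. -/
lemma fE_le_ofReal_div {n i m : ℕ} (him : i ≤ m) (hm : m < n) :
    fE n i ≤ ENNReal.ofReal ((i : ℝ) / (n - m)) := by
  have hi := him.trans_lt hm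
  have hnm : (0 : ℝ) < n - m := sub_pos.mpr (by exact_mod_cast hm)
  have hni : (0 : ℝ) < n - i := sub_pos.mpr (by exact_mod_cast hi)
  have hn : (n : ℝ) ≠ 0 := by exact_mod_cast (Nat.zero_le m).trans_lt hm |>.ne'
  rw [fE_of_lt hi]
  refine ENNReal.ofReal_le_ofReal ?_
  have hlog := Real.one_sub_inv_le_log_of_pos (one_sub_natCast_div_pos hi)
  calc -Real.log (1 - (i : ℝ) / n) ≤ (i : ℝ) / (n - i) := by
        have : (1 - (i : ℝ) / n)⁻¹ = 1 + i / (n - i) := by field_simp; ring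
        linarith
    _ ≤ (i : ℝ) / (n - m) := by gcongr

lemma sum_range_natCast_mul_two (m : ℕ) : (∑ i ∈ range m, (i : ℝ)) * 2 = m * (m - 1) := by
  induction m with
  | zero => simp
  | succ m ih => rw [sum_range_succ, add_mul, ih]; push_cast; ring

/-- The `J` of the recursion defining `B(c+1,n)`: the block of values `f(i/n)` starts there. -/
noncomputable def blockStart (n : ℕ) (t : ℕ → ℝ) (c : ℕ) : ℕ := Bemb n t c - c

lemma Bemb_succ_eq_add (n : ℕ) (t : ℕ → ℝ) (c : ℕ) :
    ∃ j, 1 ≤ j ∧ Bemb n t (c + 1) = Bemb n t c + j ∧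
      ∑ i ∈ Ico (blockStart n t c) (blockStart n t c + (j - 1)), fE n i ≤
        ENNReal.ofReal (t (c + 1) - t c) ∧
      ENNReal.ofReal (t (c + 1) - t c) ≤
        ∑ i ∈ Ico (blockStart n t c) (blockStart n t c + j), fE n i := by
  set S := {j : ℕ | 1 ≤ j ∧ ENNReal.ofReal (t (c + 1) - t c) ≤
    ∑ i ∈ Ico (blockStart n t c) (blockStart n t c + j), fE n i}
  -- the block of length `n + 1` reaches an index `i ≥ n`, where `f(i/n) = ∞`
  have hS : S.Nonempty := by
    refine ⟨n + 1, by omega, ?_⟩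
    rw [ENNReal.sum_eq_top.mpr ⟨max (blockStart n t c) n, by simp; omega,
      fE_eq_top (le_max_right _ _)⟩]
    exact le_top
  obtain ⟨hj1, hj⟩ := Nat.sInf_mem hS
  refine ⟨sInf S, hj1, rfl, ?_, hj⟩
  rcases eq_or_lt_of_le hj1 with hj1 | hj1
  · simp [← hj1]
  · have := Nat.notMem_of_lt_sInf (show sInf S - 1 < sInf S by omega)
    exact (not_le.mp fun h => this ⟨by omega, h⟩).le

lemma le_Bemb (n : ℕ) (t : ℕ → ℝ) (c : ℕ) : c ≤ Bemb n t c := by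
  induction c with
  | zero => exact le_rfl
  | succ c ih =>
    obtain ⟨j, hj, hB, -⟩ := Bemb_succ_eq_add n t c
    omega

lemma blockStart_succ (n : ℕ) (t : ℕ → ℝ) (c : ℕ) :
    blockStart n t c ≤ blockStart n t (c + 1) ∧
      ∑ i ∈ Ico (blockStart n t c) (blockStart n t (c + 1)), fE n i ≤
        ENNReal.ofReal (t (c + 1) - t c) ∧
      ENNReal.ofReal (t (c + 1) - t c) ≤
        ∑ i ∈ Ico (blockStart n t c) (blockStart n t (c + 1) + 1), fE n i := by
  obtain ⟨j, hj, hB, hlo, hhi⟩ := Bemb_succ_eq_add n t c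
  have hc := le_Bemb n t c
  have hstart : blockStart n t (c + 1) = blockStart n t c + (j - 1) := by
    simp only [blockStart]; omega
  rw [hstart, add_assoc, Nat.sub_add_cancel hj]
  exact ⟨le_self_add, hlo, hhi⟩

lemma sum_fE_le_ofReal {t : ℕ → ℝ} (ht : Monotone t) (n c : ℕ) :
    ∑ i ∈ range (blockStart n t c), fE n i ≤ ENNReal.ofReal (t c - t 0) := by
  induction c with
  | zero => simp [blockStart, Bemb]
  | succ c ih =>
    obtain ⟨hle, hblock, -⟩ := blockStart_succ n t c
    rw [← sum_range_add_sum_Ico _ hle]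
    calc _ ≤ ENNReal.ofReal (t c - t 0) + ENNReal.ofReal (t (c + 1) - t c) := add_le_add ih hblock
      _ = ENNReal.ofReal (t (c + 1) - t 0) := by
        rw [← ENNReal.ofReal_add (sub_nonneg.mpr (ht c.zero_le)) (sub_nonneg.mpr (ht c.le_succ))]
        congr 1; ring

lemma ofReal_le_sum_fE (n : ℕ) (t : ℕ → ℝ) (c : ℕ) :
    ENNReal.ofReal (t c - t 0) ≤
      ∑ i ∈ range (blockStart n t c), fE n i + c * fE n (blockStart n t c) := by
  induction c with
  | zero => simp
  | succ c ih =>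
    obtain ⟨hle, -, hblock⟩ := blockStart_succ n t c
    set J := blockStart n t c
    set J' := blockStart n t (c + 1)
    calc ENNReal.ofReal (t (c + 1) - t 0)
        ≤ ENNReal.ofReal (t c - t 0) + ENNReal.ofReal (t (c + 1) - t c) := by
          rw [show t (c + 1) - t 0 = (t c - t 0) + (t (c + 1) - t c) by ring]
          exact ENNReal.ofReal_add_le
      _ ≤ (∑ i ∈ range J, fE n i + c * fE n J) + ∑ i ∈ Ico J (J' + 1), fE n i :=
          add_le_add ih hblock
      _ = (∑ i ∈ range J', fE n i + fE n J') + c * fE n J := by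
          rw [sum_Ico_succ_top hle, ← sum_range_add_sum_Ico _ hle]; ring
      _ ≤ ∑ i ∈ range J', fE n i + ↑(c + 1) * fE n J' := by
          push_cast
          rw [add_mul, one_mul, add_assoc, add_comm (fE n J')]
          gcongr
          exact fE_mono n hle

lemma blockStart_mul_sub_one_le {t : ℕ → ℝ} (ht : Monotone t) {n : ℕ} (hn : 0 < n) (c : ℕ) :
    (blockStart n t c : ℝ) * (blockStart n t c - 1) ≤ 2 * n * (t c - t 0) := by
  set J := blockStart n t c
  have hT : 0 ≤ t c - t 0 := sub_nonneg.mpr (ht c.zero_le)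
  have hsum : ENNReal.ofReal (∑ i ∈ range J, (i : ℝ) / n) ≤ ENNReal.ofReal (t c - t 0) := by
    rw [ENNReal.ofReal_sum_of_nonneg fun i _ => by positivity]
    exact (sum_le_sum fun i _ => ofReal_div_le_fE n i).trans (sum_fE_le_ofReal ht n c)
  rw [ENNReal.ofReal_le_ofReal_iff hT, ← sum_div, div_le_iff₀ (by exact_mod_cast hn)] at hsum
  linarith [sum_range_natCast_mul_two J]

lemma two_mul_sub_blockStart_le_sq (n : ℕ) (t : ℕ → ℝ) (c : ℕ) (hJ : blockStart n t c < n) :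
    2 * (t c - t 0) * (n - blockStart n t c) ≤ (blockStart n t c + c) ^ 2 := by
  set J := blockStart n t c
  have hnJ : (0 : ℝ) < n - J := sub_pos.mpr (by exact_mod_cast hJ)
  have hbound : ENNReal.ofReal (t c - t 0) ≤
      ENNReal.ofReal ((∑ i ∈ range J, (i : ℝ) + c * J) / (n - J)) := by
    rw [add_div, sum_div, ENNReal.ofReal_add (by positivity) (by positivity),
      ENNReal.ofReal_sum_of_nonneg fun i _ => by positivity, mul_div_assoc,
      ENNReal.ofReal_mul (by positivity), ENNReal.ofReal_natCast]
    refine (ofReal_le_sum_fE n t c).trans (add_le_add (sum_le_sum fun i hi => ?_) ?_)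
    · exact fE_le_ofReal_div (mem_range.mp hi).le hJ
    · gcongr; exact fE_le_ofReal_div le_rfl hJ
  rw [ENNReal.ofReal_le_ofReal_iff (by positivity), le_div_iff₀ hnJ] at hbound
  nlinarith [sum_range_natCast_mul_two J, sq_nonneg (c : ℝ)]

lemma le_one_add_sqrt {J a : ℝ} (h : J * (J - 1) ≤ a) : J ≤ 1 + √a := by
  rcases le_or_gt J 1 with hJ | hJ
  · linarith [Real.sqrt_nonneg a]
  · have : J - 1 ≤ √a := (Real.le_sqrt (by linarith) (by nlinarith)).mpr (by nlinarith)
    linarith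

section Asymptotics

variable {J C T N : ℝ}

lemma add_div_sqrt_le (hC : 1 ≤ C) (hN : 0 < N) (h : J * (J - 1) ≤ 2 * N * T) :
    (J + C) / √(2 * C * N) ≤ √(T / C) + √(2 * (C / N)) := by
  have hCN : 0 < √(2 * C * N) := by positivity
  have hT : √(2 * C * N) * √(T / C) = √(2 * N * T) := by
    rw [← Real.sqrt_mul (by positivity)]; field_simp
  have hCN' : √(2 * C * N) * √(2 * (C / N)) = 2 * C := by
    rw [← Real.sqrt_mul (by positivity), show 2 * C * N * (2 * (C / N)) = (2 * C) ^ 2 by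
      field_simp, Real.sqrt_sq (by positivity)]
  rw [div_le_iff₀' hCN, mul_add, hT, hCN']
  linarith [le_one_add_sqrt h]

lemma div_le_add_div_sqrt_mul (hC : 0 < C) (hN : 0 < N) :
    J / N ≤ (J + C) / √(2 * C * N) * √(2 * (C / N)) := by
  have hCN : 0 < √(2 * C * N) := by positivity
  have : √(2 * (C / N)) = √(2 * C * N) / N := by
    rw [← Real.sqrt_sq hN.le, ← Real.sqrt_div' _ (sq_nonneg N), Real.sqrt_sq hN.le]
    congr 1; field_simp
  rw [this, div_mul_div_cancel₀ hCN.ne']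
  gcongr
  linarith

lemma div_mul_one_sub_le_sq (hC : 0 < C) (hN : 0 < N) (h : 2 * T * (N - J) ≤ (J + C) ^ 2) :
    T / C * (1 - J / N) ≤ ((J + C) / √(2 * C * N)) ^ 2 := by
  rw [div_pow, Real.sq_sqrt (by positivity), le_div_iff₀ (by positivity)]
  calc T / C * (1 - J / N) * (2 * C * N) = 2 * T * (N - J) := by field_simp
    _ ≤ (J + C) ^ 2 := h

end Asymptotics

lemma tendsto_add_div_sqrt_two_mul_mul {α : Type*} {l : Filter α} {J C T N : α → ℝ}
    (hq : Tendsto (fun x => T x / C x) l (𝓝 1)) (hr : Tendsto (fun x => C x / N x) l (𝓝 0))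
    (hJ : ∀ᶠ x in l, 0 ≤ J x) (hC : ∀ᶠ x in l, 1 ≤ C x) (hN : ∀ᶠ x in l, 0 < N x)
    (hup : ∀ᶠ x in l, J x * (J x - 1) ≤ 2 * N x * T x)
    (hlow : ∀ᶠ x in l, J x < N x → 2 * T x * (N x - J x) ≤ (J x + C x) ^ 2) :
    Tendsto (fun x => (J x + C x) / √(2 * C x * N x)) l (𝓝 1) := by
  set s := fun x => √(2 * (C x / N x))
  set U := fun x => √(T x / C x) + s x
  set E := fun x => U x * s x
  have hs : Tendsto s l (𝓝 0) := by
    simpa only [mul_zero, Real.sqrt_zero] using (hr.const_mul 2).sqrt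
  have hU : Tendsto U l (𝓝 1) := by simpa using hq.sqrt.add hs
  have hE : Tendsto E l (𝓝 0) := by simpa using hU.mul hs
  have hL : Tendsto (fun x => √(T x / C x * (1 - E x))) l (𝓝 1) := by
    simpa using (hq.mul (hE.const_sub 1)).sqrt
  have hyU : ∀ᶠ x in l, (J x + C x) / √(2 * C x * N x) ≤ U x := by
    filter_upwards [hC, hN, hup] with x hC hN hup using add_div_sqrt_le hC hN hup
  refine tendsto_of_tendsto_of_tendsto_of_le_of_le' hL hU ?_ hyU
  filter_upwards [hJ, hC, hN, hlow, hyU, hq.eventually (lt_mem_nhds one_pos),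
    hE.eventually (gt_mem_nhds one_pos)] with x hJ hC hN hlow hyU hq hE
  have hJN : J x / N x ≤ E x :=
    (div_le_add_div_sqrt_mul (by linarith) hN).trans
      (mul_le_mul_of_nonneg_right hyU (Real.sqrt_nonneg _))
  have hJN' : J x < N x := (div_lt_one hN).mp (hJN.trans_lt hE)
  rw [Real.sqrt_le_left (by positivity)]
  calc T x / C x * (1 - E x) ≤ T x / C x * (1 - J x / N x) := by gcongr
    _ ≤ _ := div_mul_one_sub_le_sq (by linarith) hN (hlow hJN')

theorem stmt_5_general (t : ℕ → ℝ) (ht : StrictMono t)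
    (hTc : Tendsto (fun c : ℕ => t c / c) atTop (nhds 1))
    (c : ℕ → ℕ)
    (hcinf : Tendsto c atTop atTop)
    (hco : Tendsto (fun n : ℕ => (c n : ℝ) / n) atTop (nhds 0)) :
    Tendsto (fun n : ℕ => (Bemb n t (c n) : ℝ) / Real.sqrt (2 * c n * n)) atTop
      (nhds 1) := by
  have hcR : Tendsto (fun n => (c n : ℝ)) atTop atTop := tendsto_natCast_atTop_atTop.comp hcinf
  have hq : Tendsto (fun n => (t (c n) - t 0) / c n) atTop (𝓝 1) := by
    simpa [sub_div] using (hTc.comp hcinf).sub (tendsto_const_nhds.div_atTop hcR)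
  have hB (n : ℕ) : (Bemb n t (c n) : ℝ) = blockStart n t (c n) + c n := by
    rw [blockStart, Nat.cast_sub (le_Bemb n t (c n)), sub_add_cancel]
  simp_rw [hB]
  refine tendsto_add_div_sqrt_two_mul_mul hq hco (.of_forall fun n => Nat.cast_nonneg _)
    (hcR.eventually_ge_atTop 1) ?_ ?_ (.of_forall fun n hn => ?_)
  · filter_upwards [eventually_gt_atTop 0] with n hn using Nat.cast_pos.mpr hn
  · filter_upwards [eventually_gt_atTop 0] with n hn
    exact blockStart_mul_sub_one_le ht.monotone hn (c n)
  · exact two_mul_sub_blockStart_le_sq n t (c n) (by exact_mod_cast hn)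

theorem stmt_5 (t : ℕ → ℝ) (ht : StrictMono t) (ht0 : t 0 = 0)
    (hTc : Tendsto (fun c : ℕ => t c / c) atTop (nhds 1))
    (c : ℕ → ℕ) (hcpos : ∀ n, 1 ≤ c n)
    (hcinf : Tendsto c atTop atTop)
    (hco : Tendsto (fun n : ℕ => (c n : ℝ) / n) atTop (nhds 0)) :
    Tendsto (fun n : ℕ => (Bemb n t (c n) : ℝ) / Real.sqrt (2 * c n * n)) atTop
      (nhds 1) :=
  stmt_5_general t ht hTc c hcinf hco
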